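/- arXiv:2604.19688 — 2 statements merged into one kernel-verified Lean document; each statement's English description precedes it below -/
import Mathlib

section
/- Let A and à be square matrices with ‖A‖ ≤ 1, ‖Ã‖ ≤ 1, and ‖Ã - A‖ ≤ ε. Let P(z) = Σ_{k=0}^n α_k z^k be a polynomial satisfying |P(z)| ≤ 1 on the unit circle. Then ‖P(Ã) - P(A)‖ ≤ √(n(n+1)(2n+1)/6)·ε. -/
open scoped Matrix.Norms.L2Operator
open Finset

-- sum of squares formula
lemma sum_range_sq (n : ℕ) :
    ∑ k ∈ range (n + 1), (k : ℝ) ^ 2 = n * (n + 1) * (2 * n + 1) / 6 := by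
  induction n with
  | zero => simp
  | succ n ih =>
    rw [Finset.sum_range_succ, ih]
    push_cast
    ring

-- Parseval via roots of unity
lemma coeff_sq_sum_le (n : ℕ) (α : ℕ → ℂ)
    (hP : ∀ z : ℂ, ‖z‖ = 1 → ‖∑ k ∈ range (n + 1), α k * z ^ k‖ ≤ 1) :
    ∑ k ∈ range (n + 1), ‖α k‖ ^ 2 ≤ 1 := by
  set N := n + 1 with hN
  set ζ : ℂ := Complex.exp (2 * Real.pi * Complex.I / N) with hζdef
  have hζ : IsPrimitiveRoot ζ N := Complex.isPrimitiveRoot_exp N (Nat.succ_ne_zero n)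
  have hζ1 : ‖ζ‖ = 1 := by
    rw [hζdef]
    have : (2 * (Real.pi : ℂ) * Complex.I / N) = ((2 * Real.pi / N : ℝ) : ℂ) * Complex.I := by
      push_cast; ring
    rw [this, Complex.norm_exp_ofReal_mul_I]
  have hζabs : ‖ζ‖ = 1 := hζ1
  have hinv : (starRingEnd ℂ) ζ = ζ⁻¹ := (Complex.inv_eq_conj hζabs).symm
  have hζne : ζ ≠ 0 := by
    intro h; rw [h] at hζabs; simp at hζabs
  -- key identity
  have key : ∑ j ∈ range N, ((∑ k ∈ range N, α k * (ζ ^ j) ^ k) *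
      (starRingEnd ℂ) (∑ k ∈ range N, α k * (ζ ^ j) ^ k)) =
      (N : ℂ) * ∑ k ∈ range N, α k * (starRingEnd ℂ) (α k) := by
    have expand : ∀ j ∈ range N, ((∑ k ∈ range N, α k * (ζ ^ j) ^ k) *
        (starRingEnd ℂ) (∑ k ∈ range N, α k * (ζ ^ j) ^ k)) =
        ∑ k ∈ range N, ∑ l ∈ range N,
          (α k * (starRingEnd ℂ) (α l)) * (ζ ^ k * (ζ ^ l)⁻¹) ^ j := by
      intro j _
      rw [map_sum, Finset.sum_mul_sum]
      refine Finset.sum_congr rfl fun k _ => Finset.sum_congr rfl fun l _ => ?_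
      rw [map_mul, map_pow, map_pow, hinv]
      simp only [inv_pow, ← pow_mul]
      rw [Nat.mul_comm j k, Nat.mul_comm j l]
      ring
    rw [Finset.sum_congr rfl expand, Finset.sum_comm]
    rw [Finset.mul_sum]
    refine Finset.sum_congr rfl fun k hk => ?_
    rw [Finset.sum_comm]
    have : ∀ l ∈ range N, ∑ j ∈ range N, (α k * (starRingEnd ℂ) (α l)) * (ζ ^ k * (ζ ^ l)⁻¹) ^ j
        = if l = k then (N : ℂ) * (α k * (starRingEnd ℂ) (α k)) else 0 := by
      intro l hl
      rw [← Finset.mul_sum]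
      by_cases h : l = k
      · subst h
        simp [mul_inv_cancel₀ (pow_ne_zero _ hζne), mul_comm]
      · have hw : ζ ^ k * (ζ ^ l)⁻¹ ≠ 1 := by
          intro hcontra
          rw [mul_inv_eq_one₀ (pow_ne_zero _ hζne)] at hcontra
          exact h (hζ.pow_inj (mem_range.mp hl) (mem_range.mp hk) hcontra.symm)
        rw [geom_sum_eq hw]
        have hz : ζ ^ N = 1 := hζ.pow_eq_one
        have hwN : (ζ ^ k * (ζ ^ l)⁻¹) ^ N = 1 := by
          rw [mul_pow, inv_pow, ← pow_mul, ← pow_mul, Nat.mul_comm k N, Nat.mul_comm l N,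
            pow_mul, pow_mul, hz, one_pow, one_pow, inv_one, one_mul]
        rw [hwN]
        simp [h]
    rw [Finset.sum_congr rfl this, Finset.sum_ite_eq' (range N) k]
    simp [mem_range.mp hk]
  have key2 : ∑ j ∈ range N, Complex.normSq (∑ k ∈ range N, α k * (ζ ^ j) ^ k)
      = (N : ℝ) * ∑ k ∈ range N, Complex.normSq (α k) := by
    have h2 := key
    simp only [Complex.mul_conj] at h2
    exact_mod_cast h2
  have hbound : ∑ j ∈ range N, Complex.normSq (∑ k ∈ range N, α k * (ζ ^ j) ^ k) ≤ N := by
    calc ∑ j ∈ range N, Complex.normSq (∑ k ∈ range N, α k * (ζ ^ j) ^ k)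
        ≤ ∑ _j ∈ range N, (1 : ℝ) := by
          refine Finset.sum_le_sum fun j _ => ?_
          have hz : ‖(ζ ^ j : ℂ)‖ = 1 := by rw [norm_pow, hζ1, one_pow]
          have := hP (ζ ^ j) hz
          have h3 : Complex.normSq (∑ k ∈ range N, α k * (ζ ^ j) ^ k)
              = ‖∑ k ∈ range N, α k * (ζ ^ j) ^ k‖ ^ 2 := by
            rw [← Complex.sq_norm]
          rw [h3]
          nlinarith [norm_nonneg (∑ k ∈ range N, α k * (ζ ^ j) ^ k)]
      _ = N := by simp
  have hNpos : (0 : ℝ) < N := by positivity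
  have hsum : ∑ k ∈ range N, Complex.normSq (α k) ≤ 1 := by
    rw [key2] at hbound
    nlinarith
  calc ∑ k ∈ range (n + 1), ‖α k‖ ^ 2 = ∑ k ∈ range N, Complex.normSq (α k) := by
        refine Finset.sum_congr rfl fun k _ => ?_
        rw [Complex.sq_norm]
    _ ≤ 1 := hsum

lemma pow_mul_norm_le {d : ℕ} (B C : Matrix (Fin d) (Fin d) ℂ) (hB : ‖B‖ ≤ 1) (k : ℕ) :
    ‖B ^ k * C‖ ≤ ‖C‖ := by
  induction k with
  | zero => simp
  | succ k ih =>
    have h : B ^ (k + 1) * C = B * (B ^ k * C) := by rw [pow_succ', mul_assoc]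
    rw [h]
    calc ‖B * (B ^ k * C)‖ ≤ ‖B‖ * ‖B ^ k * C‖ := norm_mul_le _ _
      _ ≤ 1 * ‖C‖ := mul_le_mul hB ih (norm_nonneg _) zero_le_one
      _ = ‖C‖ := one_mul _

lemma pow_diff_norm {d : ℕ} (A A' : Matrix (Fin d) (Fin d) ℂ)
    (hA : ‖A‖ ≤ 1) (hA' : ‖A'‖ ≤ 1) (ε : ℝ) (hAA' : ‖A' - A‖ ≤ ε) (k : ℕ) :
    ‖A' ^ k - A ^ k‖ ≤ k * ε := by
  have hε0 : 0 ≤ ε := le_trans (norm_nonneg _) hAA'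
  induction k with
  | zero => simp
  | succ k ih =>
    have h : A' ^ (k + 1) - A ^ (k + 1) = A' ^ k * (A' - A) + (A' ^ k - A ^ k) * A := by
      rw [mul_sub, sub_mul, pow_succ, pow_succ]
      abel
    rw [h]
    calc ‖A' ^ k * (A' - A) + (A' ^ k - A ^ k) * A‖
        ≤ ‖A' ^ k * (A' - A)‖ + ‖(A' ^ k - A ^ k) * A‖ := norm_add_le _ _
      _ ≤ ε + k * ε := by
          refine add_le_add (le_trans (pow_mul_norm_le A' _ hA' k) hAA') ?_
          calc ‖(A' ^ k - A ^ k) * A‖ ≤ ‖A' ^ k - A ^ k‖ * ‖A‖ := norm_mul_le _ _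
            _ ≤ (k * ε) * 1 := mul_le_mul ih hA (norm_nonneg _) (by positivity)
            _ = k * ε := mul_one _
      _ = (k + 1 : ℕ) * ε := by push_cast; ring

/-- If `‖A‖ ≤ 1`, `‖A'‖ ≤ 1`, `‖A' - A‖ ≤ ε`, and `P(z) = ∑_{k=0}^n α_k z^k` with
`|P(z)| ≤ 1` on the unit circle, then `‖P(A') - P(A)‖ ≤ √(n(n+1)(2n+1)/6)·ε`. -/
theorem poly_matrix_perturbation {d : ℕ} (A A' : Matrix (Fin d) (Fin d) ℂ)
    (hA : ‖A‖ ≤ 1) (hA' : ‖A'‖ ≤ 1) (ε : ℝ) (hε : 0 < ε) (hAA' : ‖A' - A‖ ≤ ε)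
    (n : ℕ) (α : ℕ → ℂ)
    (hP : ∀ z : ℂ, ‖z‖ = 1 → ‖∑ k ∈ Finset.range (n + 1), α k * z ^ k‖ ≤ 1) :
    ‖(∑ k ∈ Finset.range (n + 1), α k • A' ^ k) -
        ∑ k ∈ Finset.range (n + 1), α k • A ^ k‖ ≤
      Real.sqrt ((n : ℝ) * (n + 1) * (2 * n + 1) / 6) * ε := by
  have hCS : ∑ k ∈ range (n + 1), (k : ℝ) * ‖α k‖
      ≤ Real.sqrt ((n : ℝ) * (n + 1) * (2 * n + 1) / 6) := by
    have h1 : (∑ k ∈ range (n + 1), (k : ℝ) * ‖α k‖) ^ 2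
        ≤ (∑ k ∈ range (n + 1), (k : ℝ) ^ 2) * ∑ k ∈ range (n + 1), ‖α k‖ ^ 2 :=
      Finset.sum_mul_sq_le_sq_mul_sq _ _ _
    have h2 := coeff_sq_sum_le n α hP
    have h3 : (∑ k ∈ range (n + 1), (k : ℝ) * ‖α k‖) ^ 2
        ≤ (n : ℝ) * (n + 1) * (2 * n + 1) / 6 := by
      rw [sum_range_sq] at h1
      have hnn : (0 : ℝ) ≤ (n : ℝ) * (n + 1) * (2 * n + 1) / 6 := by positivity
      nlinarith
    have hS : 0 ≤ ∑ k ∈ range (n + 1), (k : ℝ) * ‖α k‖ :=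
      Finset.sum_nonneg fun k _ => by positivity
    exact (Real.le_sqrt hS (by positivity)).mpr h3
  have hdiff := pow_diff_norm A A' hA hA' ε hAA'
  calc ‖(∑ k ∈ Finset.range (n + 1), α k • A' ^ k) -
        ∑ k ∈ Finset.range (n + 1), α k • A ^ k‖
      = ‖∑ k ∈ range (n + 1), α k • (A' ^ k - A ^ k)‖ := by
        rw [← Finset.sum_sub_distrib]
        congr 1
        exact Finset.sum_congr rfl fun k _ => (smul_sub _ _ _).symm
    _ ≤ ∑ k ∈ range (n + 1), ‖α k • (A' ^ k - A ^ k)‖ := norm_sum_le _ _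
    _ ≤ ∑ k ∈ range (n + 1), ((k : ℝ) * ‖α k‖) * ε := by
        refine Finset.sum_le_sum fun k _ => ?_
        rw [norm_smul]
        calc ‖α k‖ * ‖A' ^ k - A ^ k‖ ≤ ‖α k‖ * ((k : ℝ) * ε) :=
              mul_le_mul_of_nonneg_left (hdiff k) (norm_nonneg _)
          _ = ((k : ℝ) * ‖α k‖) * ε := by ring
    _ = (∑ k ∈ range (n + 1), (k : ℝ) * ‖α k‖) * ε := by rw [Finset.sum_mul]
    _ ≤ Real.sqrt ((n : ℝ) * (n + 1) * (2 * n + 1) / 6) * ε :=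
        mul_le_mul_of_nonneg_right hCS hε.le
end

section
/- Let U be a block 2×2 unitary of the form U = [[A, B],[C, D]] where all blocks are d×d. Define the 2-regularized unitary V as the 4d×4d matrix with block rows (A, B, 0, 0), (0, 0, C, D), (0, 0, A, B), (C, D, 0, 0). Then V is unitary and the top-left d×d block of V² equals A². -/
/-!
Listing the block rows of `V`, they are those of `diag(U, U)` with the second and fourth
interchanged: `V = S · diag(U, U)`, where the permutation matrix `S` swaps the two halves of the
outer index exactly when the inner index lies in the second half (the incrementer controlled on
the ancilla). Both factors are unitary, hence so is `V`. In the top-left `2d × 2d` block of `V²`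
only the products `[A B; 0 0]²` and `[0 0; C D]²` contribute, and the latter vanishes in its
top-left corner.
-/

namespace Matrix

variable {m n α : Type*} [Fintype m] [Fintype n] [DecidableEq m] [DecidableEq n] [CommRing α]

def controlledSwap : Matrix ((m ⊕ n) ⊕ (m ⊕ n)) ((m ⊕ n) ⊕ (m ⊕ n)) α :=
  fromBlocks (fromBlocks 1 0 0 0) (fromBlocks 0 0 0 1) (fromBlocks 0 0 0 1) (fromBlocks 1 0 0 0)

theorem controlledSwap_mem_unitaryGroup [StarRing α] :
    (controlledSwap : Matrix ((m ⊕ n) ⊕ (m ⊕ n)) _ α) ∈ unitaryGroup _ α := by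
  rw [mem_unitaryGroup_iff, star_eq_conjTranspose, controlledSwap]
  simp only [fromBlocks_conjTranspose, conjTranspose_one, conjTranspose_zero, fromBlocks_multiply]
  simp [fromBlocks_add, ← fromBlocks_one]

theorem fromBlocks_diag_mem_unitaryGroup [StarRing α] {U : Matrix n n α}
    (hU : U ∈ unitaryGroup n α) :
    fromBlocks U 0 0 U ∈ unitaryGroup (n ⊕ n) α := by
  rw [mem_unitaryGroup_iff, star_eq_conjTranspose] at hU ⊢
  simp only [fromBlocks_conjTranspose, fromBlocks_multiply, hU]
  simp [← fromBlocks_one]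

theorem controlledSwap_mul_fromBlocks_diag (A : Matrix m m α) (B : Matrix m n α)
    (C : Matrix n m α) (D : Matrix n n α) :
    controlledSwap * fromBlocks (fromBlocks A B C D) 0 0 (fromBlocks A B C D) =
      fromBlocks (fromBlocks A B 0 0) (fromBlocks 0 0 C D)
        (fromBlocks 0 0 C D) (fromBlocks A B 0 0) := by
  simp [controlledSwap, fromBlocks_multiply]

theorem fromBlocks_sq_toBlocks₁₁_toBlocks₁₁ (A : Matrix m m α) (B : Matrix m n α)
    (C : Matrix n m α) (D : Matrix n n α) :
    (fromBlocks (fromBlocks A B 0 0) (fromBlocks 0 0 C D)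
        (fromBlocks 0 0 C D) (fromBlocks A B 0 0) ^ 2).toBlocks₁₁.toBlocks₁₁ = A ^ 2 := by
  simp [sq, fromBlocks_multiply, fromBlocks_add]

end Matrix

/-- The 2-regularization `V` of a block unitary `U = [[A,B],[C,D]]` (built with one
incrementer qubit) is unitary, and the top-left `d×d` block of `V²` equals `A²`. -/
theorem two_regular_block_encoding {d : ℕ} (A B C D : Matrix (Fin d) (Fin d) ℂ)
    (hU : Matrix.fromBlocks A B C D ∈ Matrix.unitaryGroup (Fin d ⊕ Fin d) ℂ) :
    Matrix.fromBlocks (Matrix.fromBlocks A B 0 0) (Matrix.fromBlocks 0 0 C D)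
        (Matrix.fromBlocks 0 0 C D) (Matrix.fromBlocks A B 0 0) ∈
      Matrix.unitaryGroup ((Fin d ⊕ Fin d) ⊕ (Fin d ⊕ Fin d)) ℂ ∧
    ((Matrix.fromBlocks (Matrix.fromBlocks A B 0 0) (Matrix.fromBlocks 0 0 C D)
        (Matrix.fromBlocks 0 0 C D) (Matrix.fromBlocks A B 0 0) ^ 2).toBlocks₁₁.toBlocks₁₁
      = A ^ 2) := by
  refine ⟨?_, Matrix.fromBlocks_sq_toBlocks₁₁_toBlocks₁₁ A B C D⟩
  rw [← Matrix.controlledSwap_mul_fromBlocks_diag]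
  exact mul_mem Matrix.controlledSwap_mem_unitaryGroup (Matrix.fromBlocks_diag_mem_unitaryGroup hU)
end
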